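/- Let T be a normal operator on a Hilbert space H, A = (I + T*T)⁻¹, B = TA. Then AB = BA. -/
import Mathlib


open LinearPMap
open scoped LinearPMap InnerProduct

variable {H : Type*} [NormedAddCommGroup H] [InnerProductSpace ℂ H] [CompleteSpace H]

/-- The natural domain of the composition `g ∘ f`: `{x ∈ dom f : f x ∈ dom g}`. -/
def pcompDomain (g f : H →ₗ.[ℂ] H) : Submodule ℂ H where
  carrier := {x | ∃ hx : x ∈ f.domain, f ⟨x, hx⟩ ∈ g.domain}
  add_mem' := by
    rintro a b ⟨ha, ha'⟩ ⟨hb, hb'⟩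
    refine ⟨add_mem ha hb, ?_⟩
    have h : f ⟨a + b, add_mem ha hb⟩ = f ⟨a, ha⟩ + f ⟨b, hb⟩ := f.map_add ⟨a, ha⟩ ⟨b, hb⟩
    rw [h]; exact add_mem ha' hb'
  zero_mem' := ⟨zero_mem _, by
    have h : f ⟨0, zero_mem _⟩ = 0 := f.map_zero
    rw [h]; exact zero_mem _⟩
  smul_mem' := by
    rintro c a ⟨ha, ha'⟩
    refine ⟨Submodule.smul_mem _ c ha, ?_⟩
    have h : f ⟨c • a, Submodule.smul_mem _ c ha⟩ = c • f ⟨a, ha⟩ := f.map_smul c ⟨a, ha⟩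
    rw [h]; exact Submodule.smul_mem _ c ha'

/-- Composition `g ∘ f` of unbounded operators, with its natural domain
`{x ∈ dom f : f x ∈ dom g}`. -/
noncomputable def pcomp (g f : H →ₗ.[ℂ] H) : H →ₗ.[ℂ] H :=
  g.comp (f.domRestrict (pcompDomain g f)) (by
    rintro ⟨x, hx⟩
    obtain ⟨h1, h2⟩ := hx.1
    have : f.domRestrict (pcompDomain g f) ⟨x, hx⟩ = f ⟨x, h1⟩ :=
      LinearPMap.domRestrict_apply rfl
    rw [this]; exact h2)

/-- The identity as an unbounded operator. -/
noncomputable def pid : H →ₗ.[ℂ] H := LinearMap.id.toPMap ⊤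

noncomputable example (T : H →ₗ.[ℂ] H) : H →ₗ.[ℂ] H := pid + pcomp T† T

set_option linter.unusedSectionVars false in
lemma mem_pcomp_domain' {g f : H →ₗ.[ℂ] H} {x : H} (h1 : x ∈ f.domain)
    (h2 : f ⟨x, h1⟩ ∈ g.domain) : x ∈ (pcomp g f).domain :=
  ⟨⟨h1, h2⟩, h1⟩

set_option linter.unusedSectionVars false in
lemma pcomp_apply' {g f : H →ₗ.[ℂ] H} {x : H} (h1 : x ∈ f.domain)
    (h2 : f ⟨x, h1⟩ ∈ g.domain) (hx : x ∈ (pcomp g f).domain) :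
    pcomp g f ⟨x, hx⟩ = g ⟨f ⟨x, h1⟩, h2⟩ := by
  have hd : (f.domRestrict (pcompDomain g f)) ⟨x, hx⟩ = f ⟨x, h1⟩ :=
    LinearPMap.domRestrict_apply rfl
  show g ⟨(f.domRestrict (pcompDomain g f)) ⟨x, hx⟩, _⟩ = g ⟨f ⟨x, h1⟩, h2⟩
  exact congrArg g (Subtype.ext hd)

set_option linter.unusedSectionVars false in
lemma pmap_eq_apply {f g : H →ₗ.[ℂ] H} (h : f = g) {x : H} (hx : x ∈ f.domain) :
    f ⟨x, hx⟩ = g ⟨x, h ▸ hx⟩ := by subst h; rfl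

theorem stmt6 (T : H →ₗ.[ℂ] H) (hclosed : T.IsClosed) (hdense : Dense (T.domain : Set H))
    (hnormal : pcomp T† T = pcomp T T†)
    (S : H →ₗ.[ℂ] H) (hS : S = pid + pcomp T† T) (A B : H →L[ℂ] H)
    (hA₁ : ∀ x : S.domain, A (S x) = (x : H))
    (hA₂ : ∀ y : H, ∃ h : A y ∈ S.domain, S ⟨A y, h⟩ = y)
    (hB : ∀ x : H, ∃ h : A x ∈ T.domain, T ⟨A x, h⟩ = B x) :
    A ∘L B = B ∘L A := by
  have hSmem : ∀ {x : H}, x ∈ S.domain → x ∈ (pcomp T† T).domain := by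
    intro x hx; rw [hS] at hx; exact hx.2
  have hSapply : ∀ {x : H} (hx : x ∈ S.domain),
      S ⟨x, hx⟩ = x + pcomp T† T ⟨x, hSmem hx⟩ := by
    intro x hx
    rw [pmap_eq_apply hS hx]
    rfl
  have hSmem' : ∀ {x : H}, x ∈ (pcomp T† T).domain → x ∈ S.domain := by
    intro x hx; rw [hS]; exact ⟨trivial, hx⟩
  ext y
  simp only [ContinuousLinearMap.comp_apply]
  set u := A y with hu_def
  obtain ⟨hu, hSu⟩ := hA₂ y
  obtain ⟨hv, hSv⟩ := hA₂ u
  set v := A u with hv_def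
  obtain ⟨huT, huT'⟩ := (hSmem hu).1
  obtain ⟨hvT, hvT'⟩ := (hSmem hv).1
  obtain ⟨hBy1, hBy2⟩ := hB y
  obtain ⟨hBu1, hBu2⟩ := hB u
  have hSv' : v + (T†) ⟨T ⟨v, hvT⟩, hvT'⟩ = u := by
    rw [hSapply hv, pcomp_apply' hvT hvT' (hSmem hv)] at hSv
    exact hSv
  set w : H := T ⟨v, hvT⟩ with hw_def
  have hTdag : (T†) ⟨w, hvT'⟩ = u - v := by
    rw [← hSv']; abel
  have hmem : (T†) ⟨w, hvT'⟩ ∈ T.domain := hTdag ▸ sub_mem huT hvT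
  have hw1 : w ∈ (pcomp T T†).domain := mem_pcomp_domain' hvT' hmem
  have hw2 : w ∈ (pcomp T† T).domain := by rw [hnormal]; exact hw1
  obtain ⟨hwT, hwT'⟩ := hw2.1
  have hwS : w ∈ S.domain := hSmem' hw2
  have key : S ⟨w, hwS⟩ = T ⟨u, huT⟩ := by
    rw [hSapply hwS, pcomp_apply' hwT hwT' (hSmem hwS)]
    have hn : (T†) ⟨T ⟨w, hwT⟩, hwT'⟩ = T ⟨(T†) ⟨w, hvT'⟩, hmem⟩ :=
      (pcomp_apply' hwT hwT' hw2).symm.trans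
        ((pmap_eq_apply hnormal hw2).trans (pcomp_apply' hvT' hmem hw1))
    rw [hn]
    have h1 : T ⟨(T†) ⟨w, hvT'⟩, hmem⟩ = T ⟨u - v, sub_mem huT hvT⟩ :=
      congrArg T (Subtype.ext hTdag)
    have hsub : T ⟨u - v, sub_mem huT hvT⟩ = T ⟨u, huT⟩ - T ⟨v, hvT⟩ :=
      T.map_sub ⟨u, huT⟩ ⟨v, hvT⟩
    rw [h1, hsub]
    show w + (T ⟨u, huT⟩ - w) = T ⟨u, huT⟩
    abel
  have hBy : B y = S ⟨w, hwS⟩ := by rw [key, ← hBy2]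
  rw [hBy, hA₁ ⟨w, hwS⟩]; exact hBu2
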